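/- Over F_2, let g(x) = Σ_{r=0}^{s} g_r x^r divide the trinomial x^n + x^i + 1 (0 < i < n) and suppose g generates a dual-containing polycyclic code C (i.e., C^⊥ ⊆ C, where C is the length-n code with generator matrix whose rows are the shifts of the coefficient vector of g). Then g = 1, i.e., C = F_2^n is the trivial code. In particular, there are no nontrivial dual-containing polycyclic codes associated with trinomials over F_2. -/

import Mathlib

/-!
The all-ones vector `𝟙` lies in any binary code `C` with `C^⊥ ⊆ C`: for `u ∈ C^⊥`
we have `u ∈ C`, so `u ⬝ 𝟙 = u ⬝ u = 0` (as `a² = a` in `𝔽₂`), whence `𝟙 ∈ C^⊥⊥ = C`.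
Every codeword of the code generated by `g` is the coefficient vector of a multiple of `g`,
so `g ∣ 1 + X + ⋯ + X^(n-1)` and hence `g ∣ X^n - 1`. Subtracting this from
`X^n + X^i + 1` in characteristic two gives `g ∣ X^i`, and `X^i` is coprime to `X^n - 1`,
so `g` is a unit.
-/

open Polynomial

section DotProduct

variable {K ι : Type*} [Field K] [Fintype ι]

theorem dotProductBilin_isRefl :
    LinearMap.BilinForm.IsRefl (dotProductBilin K K : LinearMap.BilinForm K (ι → K)) :=
  fun v w h => by simpa [dotProduct_comm] using h

theorem dotProductBilin_nondegenerate :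
    (dotProductBilin K K : LinearMap.BilinForm K (ι → K)).Nondegenerate := by
  classical
  refine (LinearMap.IsRefl.nondegenerate_iff_separatingLeft
    (dotProductBilin_isRefl (K := K) (ι := ι))).mpr fun v hv => ?_
  funext t
  simpa using hv (Pi.single t 1)

theorem Submodule.mem_iff_forall_dotProduct_eq_zero (C : Submodule K (ι → K)) (v : ι → K) :
    v ∈ C ↔ ∀ u : ι → K, (∀ c ∈ C, u ⬝ᵥ c = 0) → u ⬝ᵥ v = 0 := by
  conv_lhs => rw [← LinearMap.BilinForm.orthogonal_orthogonal
    dotProductBilin_nondegenerate dotProductBilin_isRefl C]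
  simp [LinearMap.BilinForm.mem_orthogonal_iff, dotProduct_comm]

end DotProduct

theorem one_mem_of_forall_dotProduct_eq_zero_imp_mem {ι : Type*} [Fintype ι]
    (C : Submodule (ZMod 2) (ι → ZMod 2))
    (hC : ∀ v, (∀ c ∈ C, v ⬝ᵥ c = 0) → v ∈ C) :
    (1 : ι → ZMod 2) ∈ C := by
  refine (C.mem_iff_forall_dotProduct_eq_zero 1).mpr fun u hu => ?_
  have hidem : ∀ a : ZMod 2, a * a = a := by decide
  calc u ⬝ᵥ 1 = u ⬝ᵥ u := by simp [dotProduct, hidem]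
    _ = 0 := hu u (hC u hu)

noncomputable def polycyclicCode (R : Type*) [Semiring R] (n : ℕ) (g : R[X]) :
    Submodule R (Fin n → R) :=
  Submodule.span R
    (Set.range fun j : Fin (n - g.natDegree) => fun t : Fin n => (X ^ (j : ℕ) * g).coeff t)

section Polycyclic

variable {R : Type*} [CommSemiring R] {n : ℕ}

theorem Polynomial.linearCombination_coeff_of_natDegree_lt {p : R[X]} (hp : p.natDegree < n) :
    Fintype.linearCombination R (fun t : Fin n => (X : R[X]) ^ (t : ℕ)) (fun t => p.coeff t) =
      p := by
  conv_rhs => rw [p.as_sum_range' n hp]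
  rw [Fintype.linearCombination_apply,
    Fin.sum_univ_eq_sum_range (fun t => p.coeff t • (X : R[X]) ^ t)]
  simp only [smul_eq_C_mul, C_mul_X_pow_eq_monomial]

theorem dvd_linearCombination_of_mem_polycyclicCode {g : R[X]} {c : Fin n → R}
    (hc : c ∈ polycyclicCode R n g) :
    g ∣ Fintype.linearCombination R (fun t : Fin n => (X : R[X]) ^ (t : ℕ)) c := by
  induction hc using Submodule.span_induction with
  | mem c hc =>
    obtain ⟨j, rfl⟩ := hc
    have hdeg : (X ^ (j : ℕ) * g).natDegree < n := by
      have := natDegree_X_pow_le (R := R) (j : ℕ)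
      have := natDegree_mul_le (p := (X : R[X]) ^ (j : ℕ)) (q := g)
      omega
    rw [linearCombination_coeff_of_natDegree_lt hdeg]
    exact dvd_mul_left g _
  | zero => simp
  | add c d _ _ hc hd => rw [map_add]; exact dvd_add hc hd
  | smul a c _ hc => rw [map_smul, smul_eq_C_mul]; exact dvd_mul_of_dvd_right hc _

theorem dvd_X_pow_sub_one_of_one_mem_polycyclicCode {R : Type*} [CommRing R] {g : R[X]}
    (h : (1 : Fin n → R) ∈ polycyclicCode R n g) : g ∣ X ^ n - 1 := by
  have hgeom : g ∣ ∑ t ∈ Finset.range n, (X : R[X]) ^ t := by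
    simpa [Fintype.linearCombination_apply,
      Fin.sum_univ_eq_sum_range (fun t => (X : R[X]) ^ t)] using
      dvd_linearCombination_of_mem_polycyclicCode h
  rw [← geom_sum_mul]
  exact hgeom.mul_right _

end Polycyclic

theorem Polynomial.isCoprime_X_X_pow_sub_one {R : Type*} [CommRing R] {n : ℕ} (hn : 0 < n) :
    IsCoprime (X : R[X]) (X ^ n - 1) :=
  ⟨X ^ (n - 1), -1, by rw [← pow_succ, Nat.sub_add_cancel hn]; ring⟩

theorem Polynomial.eq_one_of_isUnit_zmod_two {g : (ZMod 2)[X]} (h : IsUnit g) : g = 1 := by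
  obtain ⟨r, hr, rfl⟩ := Polynomial.isUnit_iff.mp h
  have hr1 : ∀ a : ZMod 2, a ≠ 0 → a = 1 := by decide
  rw [hr1 r hr.ne_zero, map_one]

theorem stmt_19_general (n i : ℕ) (hin : i < n) (g : (ZMod 2)[X])
    (hdvd : g ∣ X ^ n + X ^ i + 1) :
    let s := g.natDegree
    let C : Submodule (ZMod 2) (Fin n → ZMod 2) :=
      Submodule.span (ZMod 2)
        (Set.range fun j : Fin (n - s) => fun t : Fin n => (X ^ (j : ℕ) * g).coeff t)
    (∀ v : Fin n → ZMod 2, (∀ c ∈ C, dotProduct v c = 0) → v ∈ C) →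
    g = 1 := by
  intro s C hC
  have hcyc : g ∣ X ^ n - 1 :=
    dvd_X_pow_sub_one_of_one_mem_polycyclicCode (one_mem_of_forall_dotProduct_eq_zero_imp_mem C hC)
  have hXi : g ∣ X ^ i := by
    have h := dvd_sub hdvd hcyc
    rwa [show (X ^ n + X ^ i + 1 : (ZMod 2)[X]) - (X ^ n - 1) = X ^ i by
      linear_combination CharTwo.add_self_eq_zero (1 : (ZMod 2)[X])] at h
  have hcop : IsCoprime ((X : (ZMod 2)[X]) ^ i) (X ^ n - 1) :=
    (isCoprime_X_X_pow_sub_one (by omega)).pow_left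
  exact eq_one_of_isUnit_zmod_two (hcop.isUnit_of_dvd' hXi hcyc)

theorem stmt_19 (n i : ℕ) (hi : 0 < i) (hin : i < n) (g : (ZMod 2)[X])
    (hdvd : g ∣ X ^ n + X ^ i + 1) :
    let s := g.natDegree
    let C : Submodule (ZMod 2) (Fin n → ZMod 2) :=
      Submodule.span (ZMod 2)
        (Set.range fun j : Fin (n - s) => fun t : Fin n => (X ^ (j : ℕ) * g).coeff t)
    (∀ v : Fin n → ZMod 2, (∀ c ∈ C, dotProduct v c = 0) → v ∈ C) →
    g = 1 :=
  stmt_19_general n i hin g hdvd
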